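/- The conditional log-determinant mutual information reduces to an unconditional one via Schur complement: for any tripartite positive definite matrix V_ABE, I_M(A:B|E)_{V_ABE} = I_M(A:B)_{V_ABE / V_E}. -/

import Mathlib

/-!
Each determinant in the conditional quantity factors as `det V_E` times the determinant of a
Schur complement with respect to `E`, and taking that Schur complement commutes with deleting
rows and columns outside `E`. Hence `(det V_E)²` cancels between numerator and denominator, and
what remains is `I_M(A:B)` of `V / V_E`.
-/

open Matrix

/-- The log-determinant mutual information of a bipartite positive matrix. -/
noncomputable def IM {α β : Type*} [Fintype α] [Fintype β] [DecidableEq α] [DecidableEq β]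
    (W : Matrix (α ⊕ β) (α ⊕ β) ℝ) : ℝ :=
  (1/2) * Real.logb 2 ((W.toBlocks₁₁.det * W.toBlocks₂₂.det) / W.det)

namespace Matrix

theorem PosDef.toBlocks₂₂ {ι ε R : Type*} [Ring R] [PartialOrder R] [StarRing R]
    {M : Matrix (ι ⊕ ε) (ι ⊕ ε) R} (hM : M.PosDef) : M.toBlocks₂₂.PosDef :=
  hM.submatrix Sum.inr_injective

section SchurComplement

variable {ι κ ε R : Type*} [Fintype ε] [DecidableEq ε] [CommRing R]

noncomputable def schurCompl₂₂ (M : Matrix (ι ⊕ ε) (ι ⊕ ε) R) : Matrix ι ι R :=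
  M.toBlocks₁₁ - M.toBlocks₁₂ * M.toBlocks₂₂⁻¹ * M.toBlocks₂₁

theorem det_eq_det_toBlocks₂₂_mul_det_schurCompl₂₂ [Fintype ι] [DecidableEq ι]
    (M : Matrix (ι ⊕ ε) (ι ⊕ ε) R) (h : IsUnit M.toBlocks₂₂.det) :
    M.det = M.toBlocks₂₂.det * M.schurCompl₂₂.det := by
  let := invertibleOfIsUnitDet _ h
  conv_lhs => rw [← fromBlocks_toBlocks M]
  rw [det_fromBlocks₂₂, invOf_eq_nonsing_inv, schurCompl₂₂]

theorem schurCompl₂₂_submatrix (M : Matrix (ι ⊕ ε) (ι ⊕ ε) R) (e : κ → ι) :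
    (M.submatrix (Sum.elim (Sum.inl ∘ e) Sum.inr) (Sum.elim (Sum.inl ∘ e) Sum.inr)).schurCompl₂₂
      = M.schurCompl₂₂.submatrix e e := by
  change _ = M.toBlocks₁₁.submatrix e e
    - (M.toBlocks₁₂ * M.toBlocks₂₂⁻¹ * M.toBlocks₂₁).submatrix e e
  rw [submatrix_mul _ _ _ id _ Function.bijective_id,
    submatrix_mul _ _ _ id _ Function.bijective_id]
  rfl

theorem det_submatrix_sumElim_inr [Fintype κ] [DecidableEq κ] (M : Matrix (ι ⊕ ε) (ι ⊕ ε) R)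
    (e : κ → ι) (h : IsUnit M.toBlocks₂₂.det) :
    (M.submatrix (Sum.elim (Sum.inl ∘ e) Sum.inr) (Sum.elim (Sum.inl ∘ e) Sum.inr)).det
      = M.toBlocks₂₂.det * (M.schurCompl₂₂.submatrix e e).det := by
  rw [det_eq_det_toBlocks₂₂_mul_det_schurCompl₂₂ (ι := κ) _ h, schurCompl₂₂_submatrix]
  rfl

end SchurComplement

end Matrix

/-- The conditional log-determinant mutual information reduces to an unconditional one
via the Schur complement: for tripartite positive definite `V_ABE`,
`I_M(A:B|E)_V = I_M(A:B)_{V/V_E}`. -/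
theorem IM_conditional_schur {α β ε : Type*} [Fintype α] [Fintype β] [Fintype ε]
    [DecidableEq α] [DecidableEq β] [DecidableEq ε]
    (V : Matrix ((α ⊕ β) ⊕ ε) ((α ⊕ β) ⊕ ε) ℝ) (hV : V.PosDef) :
    (1/2) * Real.logb 2
      (((V.submatrix (Sum.elim (Sum.inl ∘ Sum.inl) Sum.inr : α ⊕ ε → (α ⊕ β) ⊕ ε)
            (Sum.elim (Sum.inl ∘ Sum.inl) Sum.inr : α ⊕ ε → (α ⊕ β) ⊕ ε)).det
        * (V.submatrix (Sum.elim (Sum.inl ∘ Sum.inr) Sum.inr : β ⊕ ε → (α ⊕ β) ⊕ ε)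
            (Sum.elim (Sum.inl ∘ Sum.inr) Sum.inr : β ⊕ ε → (α ⊕ β) ⊕ ε)).det)
       / (V.toBlocks₂₂.det * V.det))
    = IM (V.toBlocks₁₁ - V.toBlocks₁₂ * V.toBlocks₂₂⁻¹ * V.toBlocks₂₁) := by
  have hE : V.toBlocks₂₂.det ≠ 0 := hV.toBlocks₂₂.det_pos.ne'
  change _ = IM V.schurCompl₂₂
  rw [det_submatrix_sumElim_inr V _ hE.isUnit, det_submatrix_sumElim_inr V _ hE.isUnit,
    det_eq_det_toBlocks₂₂_mul_det_schurCompl₂₂ V hE.isUnit, mul_mul_mul_comm,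
    ← mul_assoc V.toBlocks₂₂.det, mul_div_mul_left _ _ (mul_ne_zero hE hE)]
  rfl
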